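/- (The full problem is solved by its best small subproblem.) For a discrimination problem (ρ_x)_{x∈X} on ℂ^n, let V(Y) denote the supremum of ∑_{x∈Y} Re Tr(E_x ρ_x) over all POVMs (E_x)_{x∈Y} indexed by a subset Y ⊆ X. Then V(Y) ≤ V(X) for every nonempty Y ⊆ X, and there exists a subset X' ⊆ X with |X'| ≤ n² such that V(X') = V(X). In particular for qubits (n = 2), V(X) = max over subsets X' ⊆ X with |X'| ≤ 4 of V(X'). -/

import Mathlib

/-!
The effects of a POVM are Hermitian, and Hermitian `n × n` matrices form a real vector space of
dimension `n²`. If more than `n²` effects are nonzero, they satisfy a real relation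
`∑ c x • E x = 0`, and for small `t` the family `(1 - t c x) • E x` is again a POVM whose
guessing probability is affine in `t`. Moving `t` in the direction that does not decrease the
guessing probability until the first effect vanishes shrinks the support, so every POVM on `X` is
dominated by one with at most `n²` nonzero effects, hence by the value of a subproblem of size at
most `n²`. The best of these finitely many subproblems attains `V(X)`; conversely `V` is monotone
because a POVM on `Y` extends by zero to one on `X`.
-/

open scoped ComplexOrder

/-- The value `V(Y)` of the subproblem of the discrimination problem `(ρ x)_{x ∈ X}`
indexed by a subset `Y ⊆ X`: the supremum of `∑_{x ∈ Y} Re Tr(E x * ρ x)` over all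
POVMs `(E x)_{x ∈ Y}` indexed by `Y`. -/
noncomputable def subValue {n : ℕ} {X : Type*} [Fintype X]
    (ρ : X → Matrix (Fin n) (Fin n) ℂ) (Y : Finset X) : ℝ :=
  sSup {p : ℝ | ∃ E : X → Matrix (Fin n) (Fin n) ℂ,
    (∀ x ∈ Y, (E x).PosSemidef) ∧ (∑ x ∈ Y, E x) = 1 ∧
    p = ∑ x ∈ Y, ((E x * ρ x).trace).re}

open Finset

namespace Matrix

variable {m 𝕜 : Type*} [RCLike 𝕜]

/-- Since `A j i = conj (A i j)` for Hermitian `A`, the numbers `re A i j + im A i j` over all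
`(i, j)` determine the real and imaginary parts of every entry. -/
def hermitianCoords : Matrix m m 𝕜 →ₗ[ℝ] (m × m → ℝ) where
  toFun A p := RCLike.re (A p.1 p.2) + RCLike.im (A p.1 p.2)
  map_add' A B := by ext p; simp only [add_apply, map_add, Pi.add_apply]; ring
  map_smul' r A := by
    ext p
    simp only [smul_apply, RCLike.smul_re, RCLike.smul_im, Pi.smul_apply, smul_eq_mul,
      RingHom.id_apply]
    ring

lemma IsHermitian.eq_zero_of_hermitianCoords_eq_zero {A : Matrix m m 𝕜} (hA : A.IsHermitian)
    (h : hermitianCoords A = 0) : A = 0 := by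
  ext i j
  have hij := congrFun h (i, j)
  have hji := congrFun h (j, i)
  simp only [hermitianCoords, LinearMap.coe_mk, AddHom.coe_mk, Pi.zero_apply] at hij hji
  rw [← hA.apply j i, RCLike.star_def, RCLike.conj_re, RCLike.conj_im] at hji
  exact RCLike.ext (by simpa using (by linarith : RCLike.re (A i j) = 0))
    (by simpa using (by linarith : RCLike.im (A i j) = 0))

variable [Fintype m]

lemma PosSemidef.trace_mul_nonneg {A B : Matrix m m 𝕜} (hA : A.PosSemidef) (hB : B.PosSemidef) :
    0 ≤ (A * B).trace := by
  classical
  open scoped MatrixOrder in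
  obtain ⟨C, rfl⟩ := CStarAlgebra.nonneg_iff_eq_star_mul_self.mp hA.nonneg
  rw [star_eq_conjTranspose, Matrix.mul_assoc, trace_mul_comm]
  exact (hB.mul_mul_conjTranspose_same C).trace_nonneg

lemma trace_mul_le_trace_mul {A B C : Matrix m m 𝕜} (hAB : (B - A).PosSemidef)
    (hC : C.PosSemidef) : (A * C).trace ≤ (B * C).trace := by
  have := hAB.trace_mul_nonneg hC
  rwa [Matrix.sub_mul, trace_sub, sub_nonneg] at this

lemma PosSemidef.re_trace_pos {A : Matrix m m 𝕜} (hA : A.PosSemidef) (h : A ≠ 0) :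
    0 < RCLike.re A.trace :=
  (RCLike.pos_iff.mp (hA.trace_nonneg.lt_of_ne (Ne.symm (mt hA.trace_eq_zero_iff.mp h)))).1

end Matrix

open Matrix

section supportFinset

variable {X M N : Type*} [Fintype X] [Zero M]

open Classical in
noncomputable def supportFinset (E : X → M) : Finset X :=
  {x | E x ≠ 0}

@[simp]
lemma mem_supportFinset {E : X → M} {x : X} : x ∈ supportFinset E ↔ E x ≠ 0 := by
  simp [supportFinset]

lemma sum_supportFinset [AddCommMonoid N] {E : X → M} {f : X → N}
    (hf : ∀ x, E x = 0 → f x = 0) : ∑ x ∈ supportFinset E, f x = ∑ x, f x :=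
  sum_subset (subset_univ _) fun x _ hx => hf x (by simpa using hx)

end supportFinset

section POVM

variable {X m 𝕜 : Type*} [Fintype X] [Fintype m] [RCLike 𝕜]

lemma exists_relation_of_card_lt_card_supportFinset {E : X → Matrix m m 𝕜}
    (hE : ∀ x, (E x).IsHermitian) (hcard : Fintype.card m ^ 2 < #(supportFinset E)) :
    ∃ c : X → ℝ, ∑ x, c x • E x = 0 ∧ ∃ x, E x ≠ 0 ∧ c x ≠ 0 := by
  have hdep : ¬ LinearIndepOn ℝ (hermitianCoords ∘ E) (supportFinset E : Set X) := fun hli => by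
    have := hli.fintype_card_le_finrank
    simp only [Finset.coe_sort_coe, Fintype.card_coe, Module.finrank_fintype_fun_eq_card,
      Fintype.card_prod] at this
    rw [sq] at hcard
    omega
  obtain ⟨c, hc, x, hx, hcx⟩ := not_linearIndepOn_finset_iff.mp hdep
  refine ⟨c, ?_, x, mem_supportFinset.mp hx, hcx⟩
  rw [← sum_supportFinset (E := E) fun x hx => by rw [hx, smul_zero]]
  refine IsHermitian.eq_zero_of_hermitianCoords_eq_zero
    (isSelfAdjoint_sum _ fun x _ => (hE x).smul (IsSelfAdjoint.all _)) ?_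
  simpa [map_sum] using hc

/-- Taking traces, `∑ c x * Re Tr (E x) = 0` with positive weights `Re Tr (E x)`. -/
lemma exists_pos_of_relation {E : X → Matrix m m 𝕜} (hE : ∀ x, (E x).PosSemidef) {c : X → ℝ}
    (hc : ∑ x, c x • E x = 0) (hne : ∃ x, E x ≠ 0 ∧ c x ≠ 0) : ∃ x, E x ≠ 0 ∧ 0 < c x := by
  have htrace : ∑ x, c x * RCLike.re (E x).trace = 0 := by
    simpa [trace_sum, RCLike.smul_re] using congrArg (fun A => RCLike.re A.trace) hc
  obtain ⟨x, hEx, hcx⟩ := hne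
  obtain ⟨y, -, hy⟩ := exists_pos_of_sum_zero_of_exists_nonzero _ htrace
    ⟨x, mem_univ x, mul_ne_zero hcx ((hE x).re_trace_pos hEx).ne'⟩
  have hEy : E y ≠ 0 := by rintro h; simp [h] at hy
  exact ⟨y, hEy, pos_of_mul_pos_left hy ((hE y).re_trace_pos hEy).le⟩

structure IsPOVM [DecidableEq m] (E : X → Matrix m m 𝕜) : Prop where
  posSemidef : ∀ x, (E x).PosSemidef
  sum_eq_one : ∑ x, E x = 1

noncomputable def guessingProb (ρ E : X → Matrix m m 𝕜) : ℝ :=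
  ∑ x, RCLike.re (E x * ρ x).trace

namespace IsPOVM

variable [DecidableEq m] {ρ E : X → Matrix m m 𝕜}

/-- Witness: `(1 - d x / d xs) • E x` for a maximiser `xs` of `d` on the support of `E`. -/
lemma exists_supportFinset_ssubset_of_relation (hE : IsPOVM E) {d : X → ℝ}
    (hd : ∑ x, d x • E x = 0) (hpos : ∃ x, E x ≠ 0 ∧ 0 < d x)
    (hval : ∑ x, d x * RCLike.re (E x * ρ x).trace ≤ 0) :
    ∃ F, IsPOVM F ∧ supportFinset F ⊂ supportFinset E ∧ guessingProb ρ E ≤ guessingProb ρ F := by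
  obtain ⟨xs, hxs, hmax⟩ := (supportFinset E).exists_max_image d
    (hpos.imp fun x hx => mem_supportFinset.2 hx.1)
  have hds : 0 < d xs := hpos.elim fun x hx => hx.2.trans_le (hmax x (mem_supportFinset.2 hx.1))
  set t := (d xs)⁻¹
  have ht : 0 < t := inv_pos.2 hds
  have hcoeff : ∀ x ∈ supportFinset E, 0 ≤ 1 - t * d x := fun x hx => by
    have := mul_le_mul_of_nonneg_left (hmax x hx) ht.le
    rw [inv_mul_cancel₀ hds.ne'] at this
    linarith
  refine ⟨fun x => (1 - t * d x) • E x, ⟨fun x => ?_, ?_⟩, ?_, ?_⟩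
  · by_cases hx : E x = 0
    · simp [hx, PosSemidef.zero]
    · exact (hE.posSemidef x).smul (hcoeff x (mem_supportFinset.2 hx))
  · simp_rw [sub_smul, one_smul, mul_smul]
    rw [sum_sub_distrib, ← smul_sum, hd, smul_zero, sub_zero, hE.sum_eq_one]
  · refine ssubset_iff_of_subset (fun x hx => ?_) |>.2 ⟨xs, hxs, ?_⟩
    · simp only [mem_supportFinset] at hx ⊢
      exact right_ne_zero_of_smul hx
    · simp [t, inv_mul_cancel₀ hds.ne']
  · have hprob : guessingProb ρ (fun x => (1 - t * d x) • E x)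
        = guessingProb ρ E - t * ∑ x, d x * RCLike.re (E x * ρ x).trace := by
      simp only [guessingProb, smul_mul_assoc, trace_smul, RCLike.smul_re, sub_mul, one_mul,
        sum_sub_distrib, mul_assoc, mul_sum]
    rw [hprob]
    nlinarith

lemma exists_supportFinset_ssubset (hE : IsPOVM E)
    (hcard : Fintype.card m ^ 2 < #(supportFinset E)) :
    ∃ F, IsPOVM F ∧ supportFinset F ⊂ supportFinset E ∧ guessingProb ρ E ≤ guessingProb ρ F := by
  obtain ⟨c, hc, hne⟩ :=
    exists_relation_of_card_lt_card_supportFinset (fun x => (hE.posSemidef x).isHermitian) hcard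
  rcases le_total (∑ x, c x * RCLike.re (E x * ρ x).trace) 0 with hval | hval
  · exact hE.exists_supportFinset_ssubset_of_relation hc
      (exists_pos_of_relation hE.posSemidef hc hne) hval
  · have hc' : ∑ x, (-c x) • E x = 0 := by simp [neg_smul, sum_neg_distrib, hc]
    refine hE.exists_supportFinset_ssubset_of_relation hc'
      (exists_pos_of_relation hE.posSemidef hc' (hne.imp fun x hx => ⟨hx.1, neg_ne_zero.2 hx.2⟩)) ?_
    simpa [neg_mul, sum_neg_distrib] using hval

theorem exists_card_supportFinset_le (hE : IsPOVM E) :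
    ∃ F, IsPOVM F ∧ #(supportFinset F) ≤ Fintype.card m ^ 2 ∧
      guessingProb ρ E ≤ guessingProb ρ F := by
  induction h : #(supportFinset E) using Nat.strong_induction_on generalizing E with
  | _ k ih =>
    by_cases hk : k ≤ Fintype.card m ^ 2
    · exact ⟨E, hE, h ▸ hk, le_rfl⟩
    · obtain ⟨F, hF, hFE, hle⟩ := hE.exists_supportFinset_ssubset (ρ := ρ) (h ▸ not_le.1 hk)
      obtain ⟨G, hG, hGcard, hFG⟩ := ih _ (h ▸ card_lt_card hFE) hF rfl
      exact ⟨G, hG, hGcard, hle.trans hFG⟩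

end IsPOVM

end POVM

section subValue

variable {n : ℕ} {X : Type*} [Fintype X] {ρ : X → Matrix (Fin n) (Fin n) ℂ}

/-- `0 ≤ a` is needed because for `Y = ∅` and `n > 0` there is no POVM and `sSup ∅ = 0`. -/
lemma subValue_le {Y : Finset X} {a : ℝ}
    (h : ∀ E : X → Matrix (Fin n) (Fin n) ℂ, (∀ x ∈ Y, (E x).PosSemidef) → ∑ x ∈ Y, E x = 1 →
      ∑ x ∈ Y, ((E x * ρ x).trace).re ≤ a) (ha : 0 ≤ a) : subValue ρ Y ≤ a :=
  Real.sSup_le (by rintro _ ⟨E, hE, hsum, rfl⟩; exact h E hE hsum) ha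

variable (hρ : ∀ x, (ρ x).PosSemidef)
include hρ

lemma subValue_nonneg (Y : Finset X) : 0 ≤ subValue ρ Y :=
  Real.sSup_nonneg <| by
    rintro _ ⟨E, hE, -, rfl⟩
    exact sum_nonneg fun x hx => (RCLike.nonneg_iff.mp ((hE x hx).trace_mul_nonneg (hρ x))).1

lemma le_subValue {Y : Finset X} {E : X → Matrix (Fin n) (Fin n) ℂ}
    (hE : ∀ x ∈ Y, (E x).PosSemidef) (hsum : ∑ x ∈ Y, E x = 1) :
    ∑ x ∈ Y, ((E x * ρ x).trace).re ≤ subValue ρ Y := by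
  classical
  refine le_csSup ⟨∑ x ∈ Y, (ρ x).trace.re, ?_⟩ ⟨E, hE, hsum, rfl⟩
  rintro _ ⟨F, hF, hFsum, rfl⟩
  refine sum_le_sum fun x hx => ?_
  have hcompl : (1 - F x).PosSemidef := by
    rw [← hFsum, ← add_sum_erase Y F hx, add_sub_cancel_left]
    exact posSemidef_sum _ fun y hy => hF y (mem_of_mem_erase hy)
  simpa using (Complex.le_def.mp (trace_mul_le_trace_mul hcompl (hρ x))).1

lemma subValue_mono {Y Z : Finset X} (hYZ : Y ⊆ Z) : subValue ρ Y ≤ subValue ρ Z := by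
  classical
  refine subValue_le (fun E hE hsum => ?_) (subValue_nonneg hρ Z)
  set F : X → Matrix (Fin n) (Fin n) ℂ := fun x => if x ∈ Y then E x else 0
  have hF : ∀ x ∈ Z, (F x).PosSemidef := fun x _ => by
    by_cases hx : x ∈ Y <;> simp [F, hx, hE x, PosSemidef.zero]
  have hFsum : ∑ x ∈ Z, F x = 1 := by simpa [F, sum_ite_mem, inter_eq_right.2 hYZ] using hsum
  calc ∑ x ∈ Y, ((E x * ρ x).trace).re = ∑ x ∈ Z, ((F x * ρ x).trace).re := by
        simp [F, apply_ite, sum_ite_mem, inter_eq_right.2 hYZ]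
    _ ≤ subValue ρ Z := le_subValue hρ hF hFsum

lemma IsPOVM.guessingProb_le_subValue {E : X → Matrix (Fin n) (Fin n) ℂ} (hE : IsPOVM E) :
    guessingProb ρ E ≤ subValue ρ (supportFinset E) := by
  have hsum : ∑ x ∈ supportFinset E, E x = 1 := by
    rw [sum_supportFinset fun _ h => h, hE.sum_eq_one]
  have := le_subValue hρ (fun x _ => hE.posSemidef x) hsum
  rwa [sum_supportFinset fun x h => by simp [h]] at this

end subValue

theorem qsd_best_small_subproblem_general {n : ℕ} {X : Type*} [Fintype X]
    (ρ : X → Matrix (Fin n) (Fin n) ℂ)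
    (hρ : ∀ x, (ρ x).PosSemidef) :
    (∀ Y : Finset X, Y.Nonempty → subValue ρ Y ≤ subValue ρ Finset.univ) ∧
    (∃ X' : Finset X, X'.card ≤ n ^ 2 ∧ subValue ρ X' = subValue ρ Finset.univ) := by
  classical
  refine ⟨fun Y _ => subValue_mono hρ (subset_univ Y), ?_⟩
  obtain ⟨X', hX', hmax⟩ := ({Y | #Y ≤ n ^ 2} : Finset (Finset X)).exists_max_image
    (subValue ρ) ⟨∅, by simp⟩
  refine ⟨X', (mem_filter.1 hX').2, le_antisymm (subValue_mono hρ (subset_univ X')) ?_⟩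
  refine subValue_le (fun E hE hsum => ?_) (subValue_nonneg hρ X')
  obtain ⟨F, hF, hcard, hle⟩ :=
    (IsPOVM.mk (fun x => hE x (mem_univ x)) hsum).exists_card_supportFinset_le (ρ := ρ)
  calc ∑ x, ((E x * ρ x).trace).re = guessingProb ρ E := rfl
    _ ≤ guessingProb ρ F := hle
    _ ≤ subValue ρ (supportFinset F) := hF.guessingProb_le_subValue hρ
    _ ≤ subValue ρ X' := hmax _ (by simpa using hcard)

/-- The full problem is solved by its best small subproblem: `V(Y) ≤ V(X)` for every
nonempty `Y ⊆ X`, and there is a subset `X' ⊆ X` with `|X'| ≤ n²` and `V(X') = V(X)`. -/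
theorem qsd_best_small_subproblem {n : ℕ} {X : Type*} [Fintype X] [Nonempty X]
    (ρ : X → Matrix (Fin n) (Fin n) ℂ)
    (hρ : ∀ x, (ρ x).PosSemidef)
    (hρtr : (∑ x, (ρ x).trace) = 1) :
    (∀ Y : Finset X, Y.Nonempty → subValue ρ Y ≤ subValue ρ Finset.univ) ∧
    (∃ X' : Finset X, X'.card ≤ n ^ 2 ∧ subValue ρ X' = subValue ρ Finset.univ) :=
  qsd_best_small_subproblem_general ρ hρ
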